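/- Let F be a linearly ordered field with integer part I and let α ∈ F with α ≥ 1. Then the following are equivalent: (a) DMO(α) holds, i.e. for all l, r ∈ F with 0 ≤ l < r < 1 there exists n ∈ I^{≥0} with l < nα − ⌊nα⌋ < r; (b) for all m ∈ I^{>0} and k ∈ I^{≥0}, the set N_{mα} ∩ (mI^{≥0} + k) contains a nonzero element. -/

import Mathlib

/-- `N_α`: the set `{⌊n·α⌋ : n ∈ I, n ≥ 0}`, where `fl` is the floor function
associated to the integer part `I` of `F`. -/
def Nset {F : Type*} [Field F] [LinearOrder F] [IsStrictOrderedRing F] (I : Subring F) (fl : F → F) (α : F) : Set F :=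
  {y | ∃ n, n ∈ I ∧ 0 ≤ n ∧ y = fl (n * α)}

/-- The arithmetic progression `m·I^{≥0} + k = {m·t + k : t ∈ I, t ≥ 0}`. -/
def AP {F : Type*} [Field F] [LinearOrder F] [IsStrictOrderedRing F] (I : Subring F) (m k : F) : Set F :=
  {y | ∃ t, t ∈ I ∧ 0 ≤ t ∧ y = m * t + k}

/-!
(b) ⇒ (a): to hit the window `(l, r)` pick `m` with `m (r - l) > 2` and `k = ⌊m l⌋ + 1`, so that
`[k, k + 1] ⊆ (m l, m r)`. If `⌊n m α⌋ = m t + k`, then `n α = t + (k + e) / m` with `0 ≤ e < 1`,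
so the fractional part of `n α` is `(k + e) / m ∈ (l, r)`.

(a) ⇒ (b): put `M = m (k + 2)`, so that `k + 1 < M`, and use density to find `n₁ ≠ 0` whose
fractional part `f` satisfies `k < M f < k + 1`. With `b = ⌊n₁ α⌋ ≥ 1` and `n = (k + 2) n₁` we get
`n m α = M b + M f`, hence `⌊n m α⌋ = M b + k = m ((k + 2) b) + k`, a positive element of the
progression.
-/

namespace IntegerPart

theorem one_le_of_pos {R : Type*} [Ring R] [LinearOrder R] {I : Subring R}
    (hdisc : ∀ x ∈ I, ¬(0 < x ∧ x < 1)) {a : R} (ha : a ∈ I) (h : 0 < a) : 1 ≤ a :=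
  not_lt.1 fun h' => hdisc a ha ⟨h, h'⟩

variable {F : Type*} [Field F] [LinearOrder F] [IsStrictOrderedRing F] {I : Subring F} {fl : F → F}

theorem fl_eq_of_le_of_lt (hdisc : ∀ x ∈ I, ¬(0 < x ∧ x < 1))
    (hfl : ∀ x : F, fl x ∈ I ∧ fl x ≤ x ∧ x < fl x + 1)
    {x a : F} (ha : a ∈ I) (h₁ : a ≤ x) (h₂ : x < a + 1) : fl x = a := by
  obtain ⟨hmem, hle, hlt⟩ := hfl x
  rcases lt_trichotomy (fl x) a with h | h | h
  · linarith [one_le_of_pos hdisc (sub_mem ha hmem) (sub_pos.2 h)]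
  · exact h
  · linarith [one_le_of_pos hdisc (sub_mem hmem ha) (sub_pos.2 h)]

theorem fl_add_of_mem (hdisc : ∀ x ∈ I, ¬(0 < x ∧ x < 1))
    (hfl : ∀ x : F, fl x ∈ I ∧ fl x ≤ x ∧ x < fl x + 1)
    {a : F} (x : F) (ha : a ∈ I) : fl (a + x) = a + fl x := by
  obtain ⟨hmem, hle, hlt⟩ := hfl x
  exact fl_eq_of_le_of_lt hdisc hfl (add_mem ha hmem) (by linarith) (by linarith)

theorem fl_zero (hdisc : ∀ x ∈ I, ¬(0 < x ∧ x < 1))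
    (hfl : ∀ x : F, fl x ∈ I ∧ fl x ≤ x ∧ x < fl x + 1) : fl 0 = 0 :=
  fl_eq_of_le_of_lt hdisc hfl I.zero_mem le_rfl (by simp)

theorem one_le_fl (hdisc : ∀ x ∈ I, ¬(0 < x ∧ x < 1))
    (hfl : ∀ x : F, fl x ∈ I ∧ fl x ≤ x ∧ x < fl x + 1)
    {x : F} (hx : 1 ≤ x) : 1 ≤ fl x := by
  obtain ⟨hmem, -, hlt⟩ := hfl x
  exact one_le_of_pos hdisc hmem (by linarith)

theorem fl_eq_of_fl_mul_eq (hdisc : ∀ x ∈ I, ¬(0 < x ∧ x < 1))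
    (hfl : ∀ x : F, fl x ∈ I ∧ fl x ≤ x ∧ x < fl x + 1)
    {m t k x : F} (hm : 0 < m) (ht : t ∈ I) (hk : 0 ≤ k) (hkm : k + 1 ≤ m)
    (h : fl (m * x) = m * t + k) : fl x = t := by
  obtain ⟨-, hle, hlt⟩ := hfl (m * x)
  rw [h] at hle hlt
  refine fl_eq_of_le_of_lt hdisc hfl ht ?_ ?_
  · nlinarith
  · nlinarith

theorem dmo_of_forall_exists_mem_ap (hdisc : ∀ x ∈ I, ¬(0 < x ∧ x < 1))
    (hfl : ∀ x : F, fl x ∈ I ∧ fl x ≤ x ∧ x < fl x + 1) {α : F}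
    (hAP : ∀ m ∈ I, 0 < m → ∀ k ∈ I, 0 ≤ k → ∃ y ∈ Nset I fl (m * α) ∩ AP I m k, y ≠ 0)
    (l r : F) (hl : 0 ≤ l) (hlr : l < r) (hr : r < 1) :
    ∃ n, n ∈ I ∧ 0 ≤ n ∧ l < n * α - fl (n * α) ∧ n * α - fl (n * α) < r := by
  have hrl : 0 < r - l := sub_pos.2 hlr
  set m := fl (2 / (r - l)) + 1
  set k := fl (m * l) + 1
  obtain ⟨hmI, -, hm⟩ := hfl (2 / (r - l))
  obtain ⟨hkI, hk, hk'⟩ := hfl (m * l)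
  have hm2 : 2 < m * (r - l) := (div_lt_iff₀ hrl).1 hm
  have hm0 : 0 < m := by nlinarith
  have hk0 : 0 ≤ k := by nlinarith
  have hkr : k + 1 < m * r := by linarith
  obtain ⟨y, ⟨⟨n, hnI, hn0, rfl⟩, ⟨t, htI, -, hy⟩⟩, -⟩ :=
    hAP m (add_mem hmI I.one_mem) hm0 k (add_mem hkI I.one_mem) hk0
  obtain ⟨-, hle, hlt⟩ := hfl (n * (m * α))
  rw [hy] at hle hlt
  have hfl_n : fl (n * α) = t :=
    fl_eq_of_fl_mul_eq hdisc hfl hm0 htI hk0 (by nlinarith) (by rw [← hy, mul_left_comm])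
  refine ⟨n, hnI, hn0, ?_, ?_⟩ <;> rw [hfl_n]
  · refine lt_of_mul_lt_mul_left ?_ hm0.le
    linarith
  · refine lt_of_mul_lt_mul_left ?_ hm0.le
    linarith

theorem forall_exists_mem_ap_of_dmo (hdisc : ∀ x ∈ I, ¬(0 < x ∧ x < 1))
    (hfl : ∀ x : F, fl x ∈ I ∧ fl x ≤ x ∧ x < fl x + 1) {α : F} (hα : 1 ≤ α)
    (hDMO : ∀ l r : F, 0 ≤ l → l < r → r < 1 →
      ∃ n, n ∈ I ∧ 0 ≤ n ∧ l < n * α - fl (n * α) ∧ n * α - fl (n * α) < r)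
    (m : F) (hmI : m ∈ I) (hm : 0 < m) (k : F) (hkI : k ∈ I) (hk : 0 ≤ k) :
    ∃ y ∈ Nset I fl (m * α) ∩ AP I m k, y ≠ 0 := by
  have hQI : k + 2 ∈ I := add_mem hkI (ofNat_mem I 2)
  have hM : k + 2 ≤ m * (k + 2) := le_mul_of_one_le_left (by linarith) (one_le_of_pos hdisc hmI hm)
  obtain ⟨n₁, hn₁I, hn₁0, hlow, hhigh⟩ := hDMO (k / (m * (k + 2))) ((k + 1) / (m * (k + 2)))
    (by positivity) (by gcongr; linarith) ((div_lt_one (by linarith)).2 (by linarith))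
  rw [div_lt_iff₀' (by linarith)] at hlow
  rw [lt_div_iff₀' (by linarith)] at hhigh
  have hn₁ : 1 ≤ n₁ := by
    refine one_le_of_pos hdisc hn₁I (hn₁0.lt_of_ne fun h => ?_)
    rw [← h, zero_mul, fl_zero hdisc hfl, sub_zero, mul_zero] at hlow
    linarith
  set b := fl (n₁ * α)
  set f := n₁ * α - b
  obtain ⟨hbI, -, -⟩ := hfl (n₁ * α)
  have hb : 1 ≤ b := one_le_fl hdisc hfl (one_le_mul_of_one_le_of_one_le hn₁ hα)
  have hfloor : fl ((k + 2) * n₁ * (m * α)) = m * ((k + 2) * b) + k := by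
    have hsplit : (k + 2) * n₁ * (m * α) = m * (k + 2) * b + m * (k + 2) * f := by ring
    rw [hsplit, fl_add_of_mem hdisc hfl _ (mul_mem (mul_mem hmI hQI) hbI),
      fl_eq_of_le_of_lt hdisc hfl hkI hlow.le hhigh]
    ring
  refine ⟨_, ⟨⟨(k + 2) * n₁, mul_mem hQI hn₁I, by positivity, hfloor.symm⟩,
    ⟨(k + 2) * b, mul_mem hQI hbI, by positivity, rfl⟩⟩, ?_⟩
  nlinarith

end IntegerPart

theorem stmt_16 {F : Type*} [Field F] [LinearOrder F] [IsStrictOrderedRing F] (I : Subring F) (fl : F → F)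
    (hdisc : ∀ x ∈ I, ¬(0 < x ∧ x < 1))
    (hfl : ∀ x : F, fl x ∈ I ∧ fl x ≤ x ∧ x < fl x + 1)
    (α : F) (hα : 1 ≤ α) :
    (∀ l r : F, 0 ≤ l → l < r → r < 1 →
        ∃ n, n ∈ I ∧ 0 ≤ n ∧ l < n * α - fl (n * α) ∧ n * α - fl (n * α) < r) ↔
    (∀ m ∈ I, 0 < m → ∀ k ∈ I, 0 ≤ k →
        ∃ y ∈ Nset I fl (m * α) ∩ AP I m k, y ≠ 0) :=
  ⟨IntegerPart.forall_exists_mem_ap_of_dmo hdisc hfl hα,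
    IntegerPart.dmo_of_forall_exists_mem_ap hdisc hfl⟩
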